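/- Let β and β' be real numbers with 1 < β ≤ β'. Then for every n ≥ 1 and every permutation π of {1,…,n}, if π ∈ Al(Σ_β) then π ∈ Al(Σ_{β'}). -/
import Mathlib


/-- The shift map iterated `k` times: `(shift k w) i = w (i + k)`,
so `shift k w = w_k w_{k+1} w_{k+2} …`. -/
def shift (k : ℕ) (w : ℕ → ℕ) : ℕ → ℕ := fun i => w (i + k)

/-- Strict lexicographic order on infinite words: `v < w` iff there is an index `i`
with `v j = w j` for all `j < i` and `v i < w i`. -/
def LexLt (v w : ℕ → ℕ) : Prop := ∃ i, (∀ j < i, v j = w j) ∧ v i < w i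

/-- Weak lexicographic order: `v ≤ w` iff `v < w` or `v = w`. -/
def LexLe (v w : ℕ → ℕ) : Prop := LexLt v w ∨ v = w

/-- A word is a bounded sequence of natural numbers. -/
def IsWord (w : ℕ → ℕ) : Prop := ∃ M, ∀ i, w i ≤ M

/-- `fword w β = ∑_{i ≥ 0} w_i β^{-(i+1)} = w_0/β + w_1/β² + …`. -/
noncomputable def fword (w : ℕ → ℕ) (β : ℝ) : ℝ := ∑' i : ℕ, (w i : ℝ) / β ^ (i + 1)

open Classical in
/-- `B̂(w)`: zero for the zero word, and otherwise `inf {β > 1 : f_w(β) ≤ 1}`. -/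
noncomputable def Bhat (w : ℕ → ℕ) : ℝ :=
  if w = fun _ => 0 then 0 else sInf {β : ℝ | 1 < β ∧ fword w β ≤ 1}

/-- `B̄(w) = sup_{j ≥ 0} B̂(σ^j w)`. -/
noncomputable def Bbar (w : ℕ → ℕ) : ℝ := ⨆ j : ℕ, Bhat (shift j w)

/-- The sequence `A_i` in the β-expansion of `β`: `A_0 = β`, `A_{i+1} = β (A_i - ⌊A_i⌋)`. -/
noncomputable def betaA (β : ℝ) : ℕ → ℝ
  | 0 => β
  | i + 1 => β * (betaA β i - (⌊betaA β i⌋₊ : ℝ))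

/-- The β-expansion of `β`: the word `a` with `a_i = ⌊A_i⌋`. -/
noncomputable def betaExp (β : ℝ) : ℕ → ℕ := fun i => ⌊betaA β i⌋₊

/-- The domain `W(β)` of the β-shift: all words `w` with `σ^k w < a` lexicographically
for every `k ≥ 0`, where `a` is the β-expansion of `β`. -/
def Wset (β : ℝ) : Set (ℕ → ℕ) :=
  {w | IsWord w ∧ ∀ k : ℕ, LexLt (shift k w) (betaExp β)}

/-- `π` is a permutation of `{1, …, n}` (viewed as a map `ℕ → ℕ`). -/
def IsPerm (n : ℕ) (π : ℕ → ℕ) : Prop := Set.BijOn π (Set.Icc 1 n) (Set.Icc 1 n)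

/-- The word `w` induces the permutation `π` of `{1, …, n}`: for all `1 ≤ i, j ≤ n`,
`π(i) < π(j)` iff `σ^{i-1} w < σ^{j-1} w` lexicographically. -/
def Induces (n : ℕ) (w : ℕ → ℕ) (π : ℕ → ℕ) : Prop :=
  ∀ i ∈ Set.Icc 1 n, ∀ j ∈ Set.Icc 1 n,
    (π i < π j ↔ LexLt (shift (i - 1) w) (shift (j - 1) w))

/-- `π ∈ Al(Σ_β)`: some word in `W(β)` induces `π`. -/
def Allowed (β : ℝ) (n : ℕ) (π : ℕ → ℕ) : Prop := ∃ w ∈ Wset β, Induces n w π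

/-- The shift-complexity `B(π) = inf {β > 1 : π ∈ Al(Σ_β)}`. -/
noncomputable def Bperm (n : ℕ) (π : ℕ → ℕ) : ℝ :=
  sInf {β : ℝ | 1 < β ∧ Allowed β n π}

/-- `ρ_m` is the permutation `1 m 2 (m-1) 3 (m-2) …` of `{1, …, m}`:
`ρ(2i-1) = i` and `ρ(2i) = m+1-i`. -/
def IsRho (m : ℕ) (ρ : ℕ → ℕ) : Prop :=
  IsPerm m ρ ∧ (∀ i, 1 ≤ i → 2 * i - 1 ≤ m → ρ (2 * i - 1) = i) ∧
    (∀ i, 1 ≤ i → 2 * i ≤ m → ρ (2 * i) = m + 1 - i)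

lemma betaA_nonneg (β : ℝ) (hβ : 1 < β) : ∀ i, 0 ≤ betaA β i := by
  intro i
  induction i with
  | zero => simp only [betaA]; linarith
  | succ i ih =>
    simp only [betaA]
    have h1 : (⌊betaA β i⌋₊ : ℝ) ≤ betaA β i := Nat.floor_le ih
    nlinarith

lemma betaA_mono (β β' : ℝ) (hβ : 1 < β) (hle : β ≤ β') :
    ∀ i, (∀ j < i, betaExp β j = betaExp β' j) → betaA β i ≤ betaA β' i := by
  intro i
  induction i with
  | zero => intro _; simpa [betaA]
  | succ i ih =>
    intro h
    have hA : betaA β i ≤ betaA β' i := ih (fun j hj => h j (Nat.lt_succ_of_lt hj))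
    have heq : betaExp β i = betaExp β' i := h i (Nat.lt_succ_self i)
    have h0 : 0 ≤ betaA β i := betaA_nonneg β hβ i
    have h1 : (⌊betaA β i⌋₊ : ℝ) ≤ betaA β i := Nat.floor_le h0
    simp only [betaA]
    unfold betaExp at heq
    rw [← heq]
    nlinarith

lemma betaExp_lexle (β β' : ℝ) (hβ : 1 < β) (hle : β ≤ β') :
    LexLe (betaExp β) (betaExp β') := by
  by_cases h : betaExp β = betaExp β'
  · exact Or.inr h
  · left
    have hne : ∃ i, betaExp β i ≠ betaExp β' i := by
      by_contra hc
      push_neg at hc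
      exact h (funext hc)
    classical
    refine ⟨Nat.find hne, fun j hj => ?_, ?_⟩
    · by_contra hcc
      exact absurd hj (not_lt.mpr (Nat.find_le hcc))
    · have hpre : ∀ j < Nat.find hne, betaExp β j = betaExp β' j := fun j hj => by
        by_contra hcc
        exact absurd hj (not_lt.mpr (Nat.find_le hcc))
      have hA := betaA_mono β β' hβ hle (Nat.find hne) hpre
      have : betaExp β (Nat.find hne) ≤ betaExp β' (Nat.find hne) :=
        Nat.floor_le_floor hA
      exact lt_of_le_of_ne this (Nat.find_spec hne)

lemma lexLt_of_lexLt_of_lexLe {v a a' : ℕ → ℕ} (h1 : LexLt v a) (h2 : LexLe a a') :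
    LexLt v a' := by
  rcases h2 with h2 | rfl
  · obtain ⟨i, hv, hvi⟩ := h1
    obtain ⟨i', ha, hai⟩ := h2
    rcases lt_trichotomy i i' with hlt | rfl | hgt
    · exact ⟨i, fun j hj => (hv j hj).trans (ha j (hj.trans hlt)), hvi.trans_le (ha i hlt).le⟩
    · exact ⟨i, fun j hj => (hv j hj).trans (ha j hj), hvi.trans hai⟩
    · exact ⟨i', fun j hj => (hv j (hj.trans hgt)).trans (ha j hj),
        ((hv i' hgt).le.trans_lt hai)⟩
  · exact h1

/-- If `1 < β ≤ β'`, then for every `n ≥ 1` and every permutation `π` of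
`{1,…,n}`, `π ∈ Al(Σ_β)` implies `π ∈ Al(Σ_{β'})`. -/
theorem stmt_14 (β β' : ℝ) (hβ : 1 < β) (hββ' : β ≤ β') (n : ℕ) (hn : 1 ≤ n)
    (π : ℕ → ℕ) (hπ : IsPerm n π) : Allowed β n π → Allowed β' n π := by
  rintro ⟨w, ⟨hw, hwk⟩, hind⟩
  exact ⟨w, ⟨hw, fun k =>
    lexLt_of_lexLt_of_lexLe (hwk k) (betaExp_lexle β β' hβ hββ')⟩, hind⟩
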